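/- arXiv:2107.04645 — 2 statements merged into one kernel-verified Lean document; each statement's English description precedes it below -/
import Mathlib

section
/- If w = (f,h) ∈ K ≀_Γ Sym(Γ) is a wreath cycle, then for any γ ∈ terr(w), the order of w equals the order of [γ,w]Yade in K multiplied by the order of h: |w| = |[γ,w]Yade| · |h|. -/
set_option linter.unusedSectionVars false

/-- The wreath product `K ≀_Γ Sym(Γ)` (with right-action conventions from the paper):
multiplication `(f,h)(e,g) = (f · e^{h⁻¹}, hg)` where `[γ](f·e^{h⁻¹}) = [γ]f * [γ^h]e`. -/
structure Wr (K : Type*) (Γ : Type*) where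
  base : Γ → K
  top : Equiv.Perm Γ

namespace Wr

variable {K Γ : Type*} [Group K]

theorem ext' {w v : Wr K Γ} (h1 : w.base = v.base) (h2 : w.top = v.top) : w = v := by
  cases w; cases v; cases h1; cases h2; rfl

instance : Group (Wr K Γ) where
  mul w v := ⟨fun γ => w.base γ * v.base (w.top γ), w.top.trans v.top⟩
  one := ⟨fun _ => 1, 1⟩
  inv w := ⟨fun γ => (w.base (w.top⁻¹ γ))⁻¹, w.top⁻¹⟩
  mul_assoc a b c := ext' (funext fun γ => mul_assoc _ _ _) (Equiv.trans_assoc _ _ _)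
  one_mul a := ext' (funext fun γ => one_mul _) (Equiv.refl_trans _)
  mul_one a := ext' (funext fun γ => mul_one _) (Equiv.trans_refl _)
  inv_mul_cancel a := ext' (funext fun γ => inv_mul_cancel _) (Equiv.symm_trans_self _)

/-- The support of a permutation, as a set. -/
def psupp (h : Equiv.Perm Γ) : Set Γ := {γ | h γ ≠ γ}

/-- The territory of a wreath product element. -/
def terr (w : Wr K Γ) : Set Γ := psupp w.top ∪ {γ | w.base γ ≠ 1}

/-- Wreath cycles: either trivial top and a singleton territory, or the top is a
single nontrivial cycle and the territory equals its support. -/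
def IsWreathCycle (w : Wr K Γ) : Prop :=
  (w.top = 1 ∧ ∃ γ₀, terr w = {γ₀}) ∨ (w.top.IsCycle ∧ terr w = psupp w.top)

/-- The yade of `w` at `γ`: the ordered product `∏_{i=0}^{|h|-1} [γ^{h^i}]f`. -/
noncomputable def yade (w : Wr K Γ) (γ : Γ) : K :=
  ((List.range (orderOf w.top)).map fun i => w.base ((w.top ^ i) γ)).prod

end Wr


namespace Wr

variable {K Γ : Type*} [Group K]

lemma mul_base' (u v : Wr K Γ) (γ : Γ) : (u * v).base γ = u.base γ * v.base (u.top γ) := rfl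

lemma mul_top' (u v : Wr K Γ) : (u * v).top = u.top.trans v.top := rfl

lemma one_base' (γ : Γ) : (1 : Wr K Γ).base γ = 1 := rfl

lemma one_top' : (1 : Wr K Γ).top = 1 := rfl

lemma top_pow' (w : Wr K Γ) (n : ℕ) : (w ^ n).top = w.top ^ n := by
  induction n with
  | zero => rfl
  | succ n ih =>
    rw [pow_succ, mul_top', ih]
    ext x
    simp only [Equiv.trans_apply, Equiv.Perm.mul_apply]
    rw [← Equiv.Perm.mul_apply, ← pow_succ']

lemma base_add (w : Wr K Γ) (a b : ℕ) (γ : Γ) :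
    (w ^ (a + b)).base γ = (w ^ a).base γ * (w ^ b).base ((w.top ^ a) γ) := by
  rw [pow_add, mul_base', top_pow']

lemma yade_eq (w : Wr K Γ) (γ : Γ) : yade w γ = (w ^ (orderOf w.top)).base γ := by
  unfold yade
  generalize orderOf w.top = n
  induction n with
  | zero => simp [one_base']
  | succ n ih =>
    rw [List.range_succ, List.map_append, List.prod_append, ih, pow_succ, mul_base',
      top_pow']
    simp

lemma base_mul_order (w : Wr K Γ) (k : ℕ) (γ : Γ) :
    (w ^ (orderOf w.top * k)).base γ = (yade w γ) ^ k := by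
  induction k with
  | zero => simp [one_base']
  | succ k ih =>
    rw [Nat.mul_succ, base_add, ih, pow_succ]
    have h1 : (w.top ^ (orderOf w.top * k)) γ = γ := by
      rw [pow_mul, pow_orderOf_eq_one, one_pow]; rfl
    rw [h1, ← yade_eq]

lemma yade_semiconj (w : Wr K Γ) (γ : Γ) :
    SemiconjBy (w.base γ) (yade w (w.top γ)) (yade w γ) := by
  have h1 := base_add w 1 (orderOf w.top) γ
  have h2 := base_add w (orderOf w.top) 1 γ
  rw [add_comm] at h1
  rw [h1, pow_one] at h2
  have h3 : (w.top ^ (orderOf w.top)) γ = γ := by rw [pow_orderOf_eq_one]; rfl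
  rw [h3] at h2
  have : (w.top ^ 1) γ = w.top γ := by rw [pow_one]
  rw [this, ← yade_eq, ← yade_eq] at h2
  unfold SemiconjBy
  exact h2

lemma yade_semiconj_pow (w : Wr K Γ) (γ : Γ) (j : ℕ) :
    ∃ c : K, SemiconjBy c (yade w ((w.top ^ j) γ)) (yade w γ) := by
  induction j with
  | zero => exact ⟨1, by simp [SemiconjBy.one_left]⟩
  | succ j ih =>
    obtain ⟨c, hc⟩ := ih
    refine ⟨c * w.base ((w.top ^ j) γ), ?_⟩
    have h1 : (w.top ^ (j + 1)) γ = w.top ((w.top ^ j) γ) := by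
      rw [pow_succ']; rfl
    rw [h1]
    exact hc.mul_left (yade_semiconj w ((w.top ^ j) γ))

lemma orderOf_yade_pow (w : Wr K Γ) (γ : Γ) (j : ℕ) :
    orderOf (yade w ((w.top ^ j) γ)) = orderOf (yade w γ) := by
  obtain ⟨c, hc⟩ := yade_semiconj_pow w γ j
  exact hc.orderOf_eq c

lemma top_pow_apply_of_not_mem_terr (w : Wr K Γ) {γ : Γ} (hγ : γ ∉ terr w) (i : ℕ) :
    (w.top ^ i) γ = γ := by
  have hfix : w.top γ = γ := by
    by_contra h
    exact hγ (Or.inl h)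
  induction i with
  | zero => rfl
  | succ i ih => rw [pow_succ']; simp only [Equiv.Perm.mul_apply, ih, hfix]

lemma yade_of_not_mem_terr (w : Wr K Γ) {γ : Γ} (hγ : γ ∉ terr w) : yade w γ = 1 := by
  have hbase : w.base γ = 1 := by
    by_contra h
    exact hγ (Or.inr h)
  unfold yade
  rw [List.prod_eq_one]
  intro x hx
  simp only [List.mem_map] at hx
  obtain ⟨i, _, rfl⟩ := hx
  rw [top_pow_apply_of_not_mem_terr w hγ, hbase]

lemma orderOf_yade_dvd [Fintype Γ] (w : Wr K Γ) (hw : IsWreathCycle w) {γ : Γ}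
    (hγ : γ ∈ terr w) (γ' : Γ) : orderOf (yade w γ') ∣ orderOf (yade w γ) := by
  by_cases hγ' : γ' ∈ terr w
  · rcases hw with ⟨htop, γ₀, hterr⟩ | ⟨hcyc, hterr⟩
    · rw [hterr] at hγ hγ'
      rw [hγ', ← hγ]
    · rw [hterr] at hγ hγ'
      obtain ⟨j, hj⟩ := hcyc.exists_pow_eq hγ hγ'
      rw [← hj, orderOf_yade_pow]
  · rw [yade_of_not_mem_terr w hγ', orderOf_one]
    exact one_dvd _

end Wr

open Wr

/-- order of a wreath cycle: `|w| = |[γ,w]Yade| · |h|` for any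
`γ` in the territory. -/
theorem orderOf_wreathCycle {K Γ : Type*} [Group K] [Fintype Γ]
    (w : Wr K Γ) (hw : IsWreathCycle w) (γ : Γ) (hγ : γ ∈ terr w) :
    orderOf w = orderOf (yade w γ) * orderOf w.top := by
  set d := orderOf (yade w γ) with hd
  set m := orderOf w.top with hm
  have hm0 : 0 < m := orderOf_pos w.top
  apply Nat.dvd_antisymm
  · -- orderOf w ∣ d * m
    rw [orderOf_dvd_iff_pow_eq_one]
    apply ext'
    · funext γ'
      rw [mul_comm d m, base_mul_order, one_base']
      have : d ∣ d := dvd_rfl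
      rw [← orderOf_dvd_iff_pow_eq_one]
      exact orderOf_yade_dvd w hw hγ γ'
    · rw [top_pow', one_top', mul_comm, pow_mul, pow_orderOf_eq_one, one_pow]
  · -- d * m ∣ orderOf w
    have hpow : w ^ (orderOf w) = 1 := pow_orderOf_eq_one w
    have htop : w.top ^ (orderOf w) = 1 := by
      rw [← top_pow', hpow, one_top']
    have hmdvd : m ∣ orderOf w := orderOf_dvd_of_pow_eq_one htop
    obtain ⟨k, hk⟩ := hmdvd
    have hbase : (yade w γ) ^ k = 1 := by
      rw [← base_mul_order, ← hk, hpow, one_base']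
    have hdk : d ∣ k := orderOf_dvd_of_pow_eq_one hbase
    rw [hk, mul_comm d m]
    exact mul_dvd_mul_left m hdk
end

section
/- Let w = (f,h) be a wreath cycle in S = K ≀_Γ Sym(Γ), and let a = (s,t) ∈ S. Then w^a = a^{-1}wa is a wreath cycle, and for each γ ∈ Γ, [γ, w^a]Yade = ([γ^{t^{-1}}]s)^{-1} · [γ^{t^{-1}}, w]Yade · [γ^{t^{-1}}]s. In particular, w and w^a have the same load. -/
set_option linter.unusedSectionVars false

open Wr

/-!
A conjugating element `(s, t)` relabels the points of `Γ` by `t` and replaces `[γ]f` by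
`([γ]s)⁻¹ [γ]f [γ^h]s`. Along an orbit of `h` these factors telescope, so every yade of `w^a` is
the `[·]s`-conjugate of the yade of `w` at the relabelled point; the territory moves by `t`, and a
cycle stays a cycle. Finally, all yades of `w` along one `h`-cycle are conjugate, because moving
the base point one step rotates the cyclic product, which is conjugation by one factor.
-/

theorem List.prod_range_map_inv_mul_mul_succ {G : Type*} [Group G] (s f : ℕ → G) (n : ℕ) :
    ((List.range n).map fun i => (s i)⁻¹ * f i * s (i + 1)).prod
      = (s 0)⁻¹ * ((List.range n).map f).prod * s n := by
  induction n with
  | zero => simp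
  | succ n ih =>
    rw [List.prod_range_succ, List.prod_range_succ, ih]
    group

namespace Wr

theorem psupp_conj {Γ : Type*} (t h : Equiv.Perm Γ) : psupp (t * h * t⁻¹) = t '' psupp h := by
  ext γ
  simp [Equiv.image_eq_preimage_symm, psupp, ← Equiv.eq_symm_apply]

variable {K Γ : Type*} [Group K]

theorem conj_top (w a : Wr K Γ) : (a⁻¹ * w * a).top = a.top * w.top * a.top⁻¹ := rfl

theorem conj_base (w a : Wr K Γ) (γ : Γ) :
    (a⁻¹ * w * a).base γ =
      (a.base (a.top⁻¹ γ))⁻¹ * w.base (a.top⁻¹ γ) * a.base (w.top (a.top⁻¹ γ)) := rfl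

theorem orderOf_conj_top (w a : Wr K Γ) : orderOf (a⁻¹ * w * a).top = orderOf w.top := by
  rw [conj_top, ← MulAut.conj_apply, MulEquiv.orderOf_eq]

theorem yade_conj (w a : Wr K Γ) (γ : Γ) :
    yade (a⁻¹ * w * a) γ =
      (a.base (a.top⁻¹ γ))⁻¹ * yade w (a.top⁻¹ γ) * a.base (a.top⁻¹ γ) := by
  have hfactor (i : ℕ) : (a⁻¹ * w * a).base (((a⁻¹ * w * a).top ^ i) γ) =
      (a.base ((w.top ^ i) (a.top⁻¹ γ)))⁻¹ * w.base ((w.top ^ i) (a.top⁻¹ γ)) *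
        a.base ((w.top ^ (i + 1)) (a.top⁻¹ γ)) := by
    rw [conj_top, conj_pow, conj_base, pow_succ']
    simp [Equiv.Perm.mul_apply]
  unfold yade
  simp only [orderOf_conj_top, hfactor, List.prod_range_map_inv_mul_mul_succ,
    pow_orderOf_eq_one, pow_zero, Equiv.Perm.one_apply]

theorem notMem_terr_iff {w : Wr K Γ} {γ : Γ} : γ ∉ terr w ↔ w.top γ = γ ∧ w.base γ = 1 := by
  simp [terr, psupp]

theorem terr_conj (w a : Wr K Γ) : terr (a⁻¹ * w * a) = a.top '' terr w := by
  ext γ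
  obtain ⟨δ, rfl⟩ := a.top.surjective γ
  rw [a.top.injective.mem_set_image, ← not_iff_not, notMem_terr_iff, notMem_terr_iff,
    conj_top, conj_base]
  simp only [Equiv.Perm.mul_apply, Equiv.Perm.inv_def, Equiv.symm_apply_apply,
    a.top.injective.eq_iff]
  refine and_congr_right fun hfix => ?_
  rw [hfix]
  simpa using conj_eq_one_iff (a := (a.base δ)⁻¹) (b := w.base δ)

theorem IsWreathCycle.conj {w : Wr K Γ} (hw : IsWreathCycle w) (a : Wr K Γ) :
    IsWreathCycle (a⁻¹ * w * a) := by
  rcases hw with ⟨htop, γ₀, hterr⟩ | ⟨hcycle, hterr⟩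
  · refine Or.inl ⟨by rw [conj_top, htop, mul_one, mul_inv_cancel], a.top γ₀, ?_⟩
    rw [terr_conj, hterr, Set.image_singleton]
  · refine Or.inr ⟨by rw [conj_top]; exact hcycle.conj, ?_⟩
    rw [terr_conj, hterr, conj_top, psupp_conj]

theorem yade_top_apply (w : Wr K Γ) (γ : Γ) :
    yade w (w.top γ) = (w.base γ)⁻¹ * yade w γ * w.base γ := by
  have hshift (i : ℕ) : (w.top ^ i) (w.top γ) = (w.top ^ (i + 1)) γ := by
    rw [pow_succ, Equiv.Perm.mul_apply]
  unfold yade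
  rcases hn : orderOf w.top with _ | m
  · simp
  · have hperiod : (w.top ^ (m + 1)) γ = γ := by rw [← hn, pow_orderOf_eq_one]; rfl
    conv_lhs => rw [List.prod_range_succ]
    conv_rhs => rw [List.prod_range_succ']
    simp only [hshift, hperiod, pow_zero, Equiv.Perm.one_apply, inv_mul_cancel_left]

theorem isConj_yade_of_sameCycle (w : Wr K Γ) {α β : Γ} (h : w.top.SameCycle α β) :
    IsConj (yade w α) (yade w β) := by
  have hstep (δ : Γ) : IsConj (yade w δ) (yade w (w.top δ)) :=
    isConj_iff.2 ⟨(w.base δ)⁻¹, by rw [yade_top_apply, inv_inv]⟩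
  obtain ⟨i, rfl⟩ := h
  induction i using Int.induction_on with
  | zero => rfl
  | succ i ih => rw [← mul_self_zpow, Equiv.Perm.mul_apply]; exact ih.trans (hstep _)
  | pred i ih =>
    have hback := hstep ((w.top ^ (-(i : ℤ) - 1)) α)
    rw [← Equiv.Perm.mul_apply, mul_self_zpow, sub_add_cancel] at hback
    exact ih.trans hback.symm

theorem IsWreathCycle.isConj_yade {w : Wr K Γ} (hw : IsWreathCycle w) {α β : Γ}
    (hα : α ∈ terr w) (hβ : β ∈ terr w) : IsConj (yade w α) (yade w β) := by
  rcases hw with ⟨-, γ₀, hterr⟩ | ⟨hcycle, hterr⟩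
  · rw [hterr] at hα hβ
    rw [hα, hβ]
  · rw [hterr] at hα hβ
    exact isConj_yade_of_sameCycle w (hcycle.sameCycle hα hβ)

end Wr

theorem conj_wreathCycle_general {K Γ : Type*} [Group K]
    (w : Wr K Γ) (hw : IsWreathCycle w) (a : Wr K Γ) :
    IsWreathCycle (a⁻¹ * w * a) ∧
      (∀ γ : Γ, yade (a⁻¹ * w * a) γ =
        (a.base (a.top⁻¹ γ))⁻¹ * yade w (a.top⁻¹ γ) * a.base (a.top⁻¹ γ)) ∧
      orderOf (a⁻¹ * w * a).top = orderOf w.top ∧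
      ∀ α ∈ terr w, ∀ β ∈ terr (a⁻¹ * w * a),
        IsConj (yade w α) (yade (a⁻¹ * w * a) β) := by
  refine ⟨hw.conj a, yade_conj w a, orderOf_conj_top w a, fun α hα β hβ => ?_⟩
  rw [terr_conj] at hβ
  obtain ⟨δ, hδ, rfl⟩ := hβ
  have hconj : IsConj (yade w δ) (yade (a⁻¹ * w * a) (a.top δ)) := by
    refine isConj_iff.2 ⟨(a.base δ)⁻¹, ?_⟩
    rw [yade_conj, Equiv.Perm.inv_def, Equiv.symm_apply_apply, inv_inv]
  exact (hw.isConj_yade hα hδ).trans hconj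

/-- a conjugate of a wreath cycle is a wreath cycle, with
`[γ, w^a]Yade = ([γ^{t⁻¹}]s)⁻¹ · [γ^{t⁻¹},w]Yade · [γ^{t⁻¹}]s`;
in particular `w` and `w^a` have the same load. -/
theorem conj_wreathCycle {K Γ : Type*} [Group K] [Fintype Γ]
    (w : Wr K Γ) (hw : IsWreathCycle w) (a : Wr K Γ) :
    IsWreathCycle (a⁻¹ * w * a) ∧
      (∀ γ : Γ, yade (a⁻¹ * w * a) γ =
        (a.base (a.top⁻¹ γ))⁻¹ * yade w (a.top⁻¹ γ) * a.base (a.top⁻¹ γ)) ∧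
      orderOf (a⁻¹ * w * a).top = orderOf w.top ∧
      ∀ α ∈ terr w, ∀ β ∈ terr (a⁻¹ * w * a),
        IsConj (yade w α) (yade (a⁻¹ * w * a) β) :=
  conj_wreathCycle_general w hw a
end
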